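/- arXiv:2307.05021 — 5 statements merged into one kernel-verified Lean document; each statement's English description precedes it below -/
import Mathlib

section
/- Let f : X → Y be a continuous surjective map between topological spaces, let y ∈ Y, and let p₁, p₂ be nontrivial sequences in Y converging to y. Define p₃ by interleaving: p₃(2n) = p₁(n) and p₃(2n+1) = p₂(n). Then p₃ converges to y, and every point x ∈ X admitting a sequence converging to x (in X) covering p₃ also admits sequences converging to x covering p₁ and covering p₂. In particular, the family {F(p) : p a nontrivial sequence converging to y} is a centered (finite intersection) family, where F(p) = {x ∈ X : some sequence in X converging to x covers p}. -/
open Filter Topology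

/-- A sequence `q` in `X` covers a sequence `p` in `Y` (w.r.t. `f`). -/
def Covers {X Y : Type*} (f : X → Y) (q : ℕ → X) (p : ℕ → Y) : Prop :=
  ∀ n, f (q n) = p n

/-- `p` is a nontrivial sequence converging to `y`: it converges to `y`
and is not eventually constant. -/
def NontrivialConvTo {Y : Type*} [TopologicalSpace Y] (p : ℕ → Y) (y : Y) : Prop :=
  Tendsto p atTop (𝓝 y) ∧ ¬ ∃ N, ∀ n ≥ N, p n = p N

theorem Filter.Tendsto.of_comp_two_mul_of_comp_two_mul_add_one {α : Type*} {l : Filter α}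
    {u : ℕ → α} (h₀ : Tendsto (fun n => u (2 * n)) atTop l)
    (h₁ : Tendsto (fun n => u (2 * n + 1)) atTop l) : Tendsto u atTop l := by
  intro s hs
  obtain ⟨N₀, hN₀⟩ := eventually_atTop.1 (h₀ hs)
  obtain ⟨N₁, hN₁⟩ := eventually_atTop.1 (h₁ hs)
  refine eventually_atTop.2 ⟨2 * max N₀ N₁, fun n hn => ?_⟩
  obtain ⟨k, rfl | rfl⟩ := n.even_or_odd'
  · exact hN₀ k (by omega)
  · exact hN₁ k (by omega)

theorem Covers.exists_tendsto_comp {X Y : Type*} {f : X → Y} {q : ℕ → X} {p : ℕ → Y}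
    {l : Filter X} (h : Covers f q p) (hq : Tendsto q atTop l) {φ : ℕ → ℕ}
    (hφ : Tendsto φ atTop atTop) :
    ∃ q' : ℕ → X, Tendsto q' atTop l ∧ Covers f q' (fun n => p (φ n)) :=
  ⟨q ∘ φ, hq.comp hφ, fun n => h (φ n)⟩

theorem interleave_centered_general {X Y : Type*} [TopologicalSpace X] [TopologicalSpace Y]
    (f : X → Y)
    (y : Y) (p₁ p₂ p₃ : ℕ → Y)
    (h₁ : NontrivialConvTo p₁ y) (h₂ : NontrivialConvTo p₂ y)
    (h₃even : ∀ n, p₃ (2 * n) = p₁ n) (h₃odd : ∀ n, p₃ (2 * n + 1) = p₂ n) :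
    Tendsto p₃ atTop (𝓝 y) ∧
    ∀ x : X, (∃ q : ℕ → X, Tendsto q atTop (𝓝 x) ∧ Covers f q p₃) →
      (∃ q : ℕ → X, Tendsto q atTop (𝓝 x) ∧ Covers f q p₁) ∧
      (∃ q : ℕ → X, Tendsto q atTop (𝓝 x) ∧ Covers f q p₂) := by
  have heven : (fun n => p₃ (2 * n)) = p₁ := funext h₃even
  have hodd : (fun n => p₃ (2 * n + 1)) = p₂ := funext h₃odd
  have htwo_mul : Tendsto (2 * ·) atTop atTop :=
    tendsto_atTop_mono (fun n => show n ≤ _ by omega) tendsto_id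
  have htwo_mul_add_one : Tendsto (2 * · + 1) atTop atTop :=
    tendsto_atTop_mono (fun n => show n ≤ _ by omega) tendsto_id
  refine ⟨.of_comp_two_mul_of_comp_two_mul_add_one (heven ▸ h₁.1) (hodd ▸ h₂.1), ?_⟩
  rintro x ⟨q, hq, hcov⟩
  exact ⟨heven ▸ hcov.exists_tendsto_comp hq htwo_mul,
    hodd ▸ hcov.exists_tendsto_comp hq htwo_mul_add_one⟩

/-- Interleaving two nontrivial sequences converging to `y` gives a sequence converging
to `y`, and every point admitting a convergent lift of the interleaved sequence admits
convergent lifts of both original sequences; in particular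
`F p₃ ⊆ F p₁ ∩ F p₂`, so the family `{F p}` is centered. -/
theorem interleave_centered {X Y : Type*} [TopologicalSpace X] [TopologicalSpace Y]
    (f : X → Y) (hf : Continuous f) (hsurj : Function.Surjective f)
    (y : Y) (p₁ p₂ p₃ : ℕ → Y)
    (h₁ : NontrivialConvTo p₁ y) (h₂ : NontrivialConvTo p₂ y)
    (h₃even : ∀ n, p₃ (2 * n) = p₁ n) (h₃odd : ∀ n, p₃ (2 * n + 1) = p₂ n) :
    Tendsto p₃ atTop (𝓝 y) ∧
    ∀ x : X, (∃ q : ℕ → X, Tendsto q atTop (𝓝 x) ∧ Covers f q p₃) →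
      (∃ q : ℕ → X, Tendsto q atTop (𝓝 x) ∧ Covers f q p₁) ∧
      (∃ q : ℕ → X, Tendsto q atTop (𝓝 x) ∧ Covers f q p₂) :=
  interleave_centered_general f y p₁ p₂ p₃ h₁ h₂ h₃even h₃odd
end

section
/- Every closed sequence-covering continuous surjection f : X → Y between T1 regular spaces, where X is submetrizable, is 1-sequence-covering: for every y ∈ Y there exists x ∈ f⁻¹(y) such that every nontrivial sequence in Y converging to y is covered by some sequence in X converging to x. -/
/-!
Fix `y` with a nontrivial sequence converging to it, and pick one such sequence `p₀` avoiding `y`.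
Let `K` be the set of points `x` of the fibre `f⁻¹ y` such that `p₀` meets `f '' U` infinitely
often for every neighbourhood `U` of `x`. As `f` is closed, a sequence whose images converge to
`y` without reaching it has a cluster point; choosing such lifts of `p₀` close to a sequence in
`K` for the coarser metric `g`, and using regularity, shows that `K` is countably compact, hence
compact since it injects continuously into a metric space.

If no point of `K` were a common limit, each `x ∈ K` would have an open neighbourhood `U` and a
sequence `s → y` frequently outside `f '' U`. Finitely many such `U` cover `K`; interleaving `p₀`
with the corresponding `s` gives a nontrivial sequence whose lift converges to a point of `K`,
hence into some `U`, so that `s` is eventually in `f '' U`. Finally, if `p` is eventually in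
`f '' U` for every neighbourhood `U` of `x`, lifts of `p` converging to `x` for `g` exist, and
closedness of `f` upgrades their convergence to convergence in `X`.
-/

open Filter Topology

open Set Function

section Sequences

variable {α Y : Type*} [TopologicalSpace Y]

theorem nontrivialConvTo_iff {p : ℕ → Y} {y : Y} :
    NontrivialConvTo p y ↔ Tendsto p atTop (𝓝 y) ∧ ∀ c, ¬∀ᶠ n in atTop, p n = c := by
  refine and_congr_right fun _ =>
    not_congr ⟨fun ⟨N, hN⟩ => ?_, fun ⟨c, hc⟩ => ?_⟩ |>.trans not_exists
  · exact ⟨p N, eventually_atTop.2 ⟨N, hN⟩⟩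
  · obtain ⟨N, hN⟩ := eventually_atTop.1 hc
    exact ⟨N, fun n hn => (hN n hn).trans (hN N le_rfl).symm⟩

theorem NontrivialConvTo.of_map_atTop_le {p q : ℕ → Y} {y : Y} (hp : NontrivialConvTo p y)
    (hq : Tendsto q atTop (𝓝 y)) (hpq : map p atTop ≤ map q atTop) : NontrivialConvTo q y :=
  nontrivialConvTo_iff.2 ⟨hq, fun c hc =>
    (nontrivialConvTo_iff.1 hp).2 c (tendsto_pure.1 (hpq.trans (tendsto_pure.2 hc)))⟩

theorem NontrivialConvTo.exists_ne [T1Space Y] {p : ℕ → Y} {y : Y} (hp : NontrivialConvTo p y) :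
    ∃ p' : ℕ → Y, NontrivialConvTo p' y ∧ ∀ n, p' n ≠ y := by
  rw [nontrivialConvTo_iff] at hp
  obtain ⟨φ, hφ, hne⟩ := extraction_of_frequently_atTop (not_eventually.1 (hp.2 y))
  refine ⟨p ∘ φ, nontrivialConvTo_iff.2 ⟨hp.1.comp hφ.tendsto_atTop, fun c hc => ?_⟩, hne⟩
  have hcy : c = y := tendsto_const_nhds_iff.1 ((hp.1.comp hφ.tendsto_atTop).congr' hc)
  obtain ⟨n, hn⟩ := hc.exists
  exact hne n (hn.trans hcy)

/-- The sequence `u 0, v 0, u 1, v 1, …`. -/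
def interleave (u v : ℕ → α) : ℕ → α :=
  Sum.elim u v ∘ Equiv.natSumNatEquivNat.symm

theorem interleave_two_mul (u v : ℕ → α) (k : ℕ) : interleave u v (2 * k) = u k := by
  simp [interleave]

theorem interleave_two_mul_add_one (u v : ℕ → α) (k : ℕ) : interleave u v (2 * k + 1) = v k := by
  simp [interleave]

theorem map_interleave_atTop (u v : ℕ → α) :
    map (interleave u v) atTop = map u atTop ⊔ map v atTop := by
  refine le_antisymm (fun S hS => ?_) (sup_le ?_ ?_)
  · obtain ⟨N₁, hN₁⟩ := mem_atTop_sets.1 (mem_map.1 (mem_sup.1 hS).1)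
    obtain ⟨N₂, hN₂⟩ := mem_atTop_sets.1 (mem_map.1 (mem_sup.1 hS).2)
    refine mem_map.2 (mem_atTop_sets.2 ⟨2 * (N₁ + N₂), fun n hn => ?_⟩)
    obtain ⟨k, rfl | rfl⟩ := Nat.even_or_odd' n
    · simpa only [mem_preimage, interleave_two_mul] using hN₁ k (by omega)
    · simpa only [mem_preimage, interleave_two_mul_add_one] using hN₂ k (by omega)
  · exact (tendsto_map.comp (tendsto_atTop_mono (fun k => by simp only [id]; omega)
      tendsto_id)).congr (interleave_two_mul u v)
  · exact (tendsto_map.comp (tendsto_atTop_mono (fun k => by simp only [id]; omega)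
      tendsto_id)).congr (interleave_two_mul_add_one u v)

theorem exists_map_atTop_eq_sup {ι : Type*} (p : ℕ → α) (s : ι → ℕ → α) (t : Finset ι) :
    ∃ q : ℕ → α, map q atTop = map p atTop ⊔ ⨆ i ∈ t, map (s i) atTop := by
  classical
  induction t using Finset.induction_on with
  | empty => exact ⟨p, by simp⟩
  | insert a t _ ih =>
    obtain ⟨q, hq⟩ := ih
    refine ⟨interleave q (s a), ?_⟩
    rw [map_interleave_atTop, hq, Finset.iSup_insert]
    ac_rfl

end Sequences

section ClusterPtComap

variable {X Y : Type*} [TopologicalSpace X] {f : X → Y} {p : ℕ → Y} {x : X}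

theorem ClusterPt.frequently_mem_image (hx : ClusterPt x (comap f (Filter.map p atTop)))
    {U : Set X} (hU : U ∈ 𝓝 x) : ∃ᶠ n in atTop, p n ∈ f '' U := by
  have h : (Filter.map p atTop ⊓ 𝓟 (f '' U)).NeBot := by
    refine (neBot_inf_comap_iff_map.1 hx).mono ?_
    rw [inf_comm]
    exact inf_le_inf_left _ (le_principal_iff.2 (image_mem_map hU))
  exact frequently_map.1 (frequently_mem_iff_neBot.2 h)

theorem clusterPt_comap_of_map_atTop_le (h : map p atTop ≤ map f (𝓝 x)) :
    ClusterPt x (comap f (map p atTop)) := by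
  rw [ClusterPt, neBot_inf_comap_iff_map, inf_of_le_right h]
  infer_instance

end ClusterPtComap

section ClosedMap

variable {X Y : Type*} [TopologicalSpace X] [TopologicalSpace Y] {f : X → Y}

theorem exists_mapClusterPt_of_isClosedMap [T1Space X] (hf : IsClosedMap f) {w : ℕ → X} {y : Y}
    (hw : Tendsto (f ∘ w) atTop (𝓝 y)) (hne : ∀ n, f (w n) ≠ y) :
    ∃ z, MapClusterPt z atTop w := by
  by_contra! h
  have hlf : LocallyFinite fun n => ({w n} : Set X) := fun z => by
    obtain ⟨U, hU, hev⟩ : ∃ U ∈ 𝓝 z, ∀ᶠ n in atTop, w n ∉ U := by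
      simpa [mapClusterPt_iff_frequently, not_frequently] using h z
    refine ⟨U, hU, ?_⟩
    simpa [← Nat.cofinite_eq_atTop, eventually_cofinite] using hev
  have hclosed : IsClosed (f '' range w) := by
    refine hf _ ?_
    simpa only [← iUnion_singleton_eq_range] using hlf.isClosed_iUnion fun _ => isClosed_singleton
  obtain ⟨_, ⟨n, rfl⟩, hn⟩ :=
    hclosed.mem_of_tendsto hw (Eventually.of_forall fun n => mem_image_of_mem f (mem_range_self n))
  exact hne n hn

theorem tendsto_of_isClosedMap_of_tendsto_comp [T1Space X] {M : Type*} [TopologicalSpace M]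
    [T2Space M] {g : X → M} (hf : IsClosedMap f) (hg : Continuous g) (hginj : Injective g)
    {q : ℕ → X} {x : X} (hfq : Tendsto (f ∘ q) atTop (𝓝 (f x)))
    (hgq : Tendsto (g ∘ q) atTop (𝓝 (g x))) (hfib : ∀ n, f (q n) = f x → q n = x) :
    Tendsto q atTop (𝓝 x) := by
  by_contra h
  obtain ⟨U, hU, hqU⟩ := not_tendsto_iff_exists_frequently_notMem.1 h
  obtain ⟨φ, hφ, hφU⟩ := extraction_of_frequently_atTop hqU
  have hne : ∀ j, f (q (φ j)) ≠ f x := fun j hj => hφU j (hfib _ hj ▸ mem_of_mem_nhds hU)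
  obtain ⟨z, hz⟩ := exists_mapClusterPt_of_isClosedMap hf (hfq.comp hφ.tendsto_atTop) hne
  have hzx : z = x := hginj <| eq_of_nhds_neBot <|
    (hz.continuousAt_comp hg.continuousAt).clusterPt.mono (hgq.comp hφ.tendsto_atTop)
  obtain ⟨j, hj⟩ := (hz.frequently (hzx ▸ hU)).exists
  exact hφU j hj

end ClosedMap

theorem IsCountablyCompact.isCompact_of_continuous_injective {X M : Type*} [TopologicalSpace X]
    [TopologicalSpace M] [TopologicalSpace.MetrizableSpace M] {K : Set X}
    (hK : IsCountablyCompact K) {g : X → M} (hg : Continuous g) (hginj : Injective g) :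
    IsCompact K := by
  have : CountablyCompactSpace K := isCountablyCompact_iff_countablyCompactSpace.1 hK
  have hcomp : ∀ D : Set K, IsClosed D → IsCompact (K.domRestrict g '' D) := fun D hD =>
    ((hD.isCountablyCompact.image (hg.comp continuous_subtype_val)).isSeqCompact).isCompact
  have hemb : Topology.IsClosedEmbedding (K.domRestrict g) :=
    .of_continuous_injective_isClosedMap (hg.comp continuous_subtype_val)
      (hginj.comp Subtype.val_injective) fun D hD => (hcomp D hD).isClosed
  rw [isCompact_iff_isCompact_univ, hemb.isInducing.isCompact_iff]
  exact hcomp univ isClosed_univ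

theorem exists_seq_mem_tendsto_comp {X M : Type*} [MetricSpace M] {S : ℕ → Set X}
    (hS : ∀ n, (S n).Nonempty) {g : X → M} {a : M}
    (h : ∀ ε > 0, ∀ᶠ n in atTop, ∃ w ∈ S n, dist (g w) a < ε) :
    ∃ q : ℕ → X, (∀ n, q n ∈ S n) ∧ Tendsto (g ∘ q) atTop (𝓝 a) := by
  have hinf : Tendsto (fun n => Metric.infDist a (g '' S n)) atTop (𝓝 0) :=
    tendsto_order.2 ⟨fun _ hε => Eventually.of_forall fun _ => hε.trans_le Metric.infDist_nonneg,
      fun ε hε => (h ε hε).mono fun n ⟨w, hw, hd⟩ =>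
        (Metric.infDist_lt_iff ((hS n).image g)).2 ⟨g w, mem_image_of_mem g hw, by rwa [dist_comm]⟩⟩
  have hnear : ∀ n, ∃ w ∈ S n, dist a (g w) < Metric.infDist a (g '' S n) + 1 / (n + 1) :=
    fun n => by
      obtain ⟨_, ⟨w, hw, rfl⟩, hd⟩ := (Metric.infDist_lt_iff ((hS n).image g)).1
        (lt_add_of_pos_right _ (by positivity : (0 : ℝ) < 1 / (n + 1)))
      exact ⟨w, hw, hd⟩
  choose q hqS hq using hnear
  refine ⟨q, hqS, tendsto_iff_dist_tendsto_zero.2 (squeeze_zero (fun _ => dist_nonneg)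
    (fun n => (dist_comm _ _).trans_le (hq n).le) ?_)⟩
  simpa using hinf.add tendsto_one_div_add_atTop_nhds_zero_nat

section CountablyCompact

variable {X Y M : Type*} [TopologicalSpace X] [TopologicalSpace Y] [MetricSpace M] [T1Space X]
  {f : X → Y} {g : X → M} {p : ℕ → Y} {y : Y}

theorem exists_mapClusterPt_seq_near (hf : IsClosedMap f) (hg : Continuous g)
    (hp : Tendsto p atTop (𝓝 y)) (hpy : ∀ n, p n ≠ y) {u : ℕ → X}
    (hu : ∀ j, ClusterPt (u j) (comap f (map p atTop))) {O : Set X} (hO : IsOpen O)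
    (huO : ∀ j, u j ∈ O) :
    ∃ w : ℕ → X, (∀ j, w j ∈ O) ∧ Tendsto (fun j => dist (g (w j)) (g (u j))) atTop (𝓝 0) ∧
      ∃ z, MapClusterPt z atTop w := by
  set V : ℕ → Set X := fun j => g ⁻¹' Metric.ball (g (u j)) (1 / (j + 1)) ∩ O
  have hV : ∀ j, V j ∈ 𝓝 (u j) := fun j =>
    ((Metric.isOpen_ball.preimage hg).inter hO).mem_nhds
      ⟨Metric.mem_ball_self (by positivity), huO j⟩
  obtain ⟨φ, hφ, hlift⟩ :=
    extraction_forall_of_frequently fun j => (hu j).frequently_mem_image (hV j)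
  choose w hwV hfw using hlift
  refine ⟨w, fun j => (hwV j).2, squeeze_zero (fun _ => dist_nonneg) (fun j => (hwV j).1.le)
    tendsto_one_div_add_atTop_nhds_zero_nat, exists_mapClusterPt_of_isClosedMap hf (y := y) ?_ ?_⟩
  · exact (hp.comp hφ.tendsto_atTop).congr fun j => (hfw j).symm
  · exact fun j => (hfw j).symm ▸ hpy (φ j)

theorem exists_subseq_tendsto_comp_of_clusterPt (hf : IsClosedMap f) (hg : Continuous g)
    (hp : Tendsto p atTop (𝓝 y)) (hpy : ∀ n, p n ≠ y) {u : ℕ → X}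
    (hu : ∀ j, ClusterPt (u j) (comap f (map p atTop))) :
    ∃ z : X, ∃ ψ : ℕ → ℕ, StrictMono ψ ∧ Tendsto (g ∘ u ∘ ψ) atTop (𝓝 (g z)) := by
  obtain ⟨w, -, hdist, z, hz⟩ :=
    exists_mapClusterPt_seq_near hf hg hp hpy hu isOpen_univ fun _ => mem_univ _
  obtain ⟨ψ, hψ, hwψ⟩ := (hz.continuousAt_comp hg.continuousAt).tendsto_subseq
  exact ⟨z, ψ, hψ, hwψ.congr_dist (hdist.comp hψ.tendsto_atTop)⟩

theorem mapClusterPt_of_tendsto_comp [RegularSpace X] (hf : IsClosedMap f) (hg : Continuous g)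
    (hginj : Injective g) (hp : Tendsto p atTop (𝓝 y)) (hpy : ∀ n, p n ≠ y) {u : ℕ → X}
    (hu : ∀ j, ClusterPt (u j) (comap f (map p atTop))) {z : X}
    (hgu : Tendsto (g ∘ u) atTop (𝓝 (g z))) : MapClusterPt z atTop u := by
  by_contra hz
  obtain ⟨N, ⟨hN, hNc⟩, hev⟩ : ∃ N, (N ∈ 𝓝 z ∧ IsClosed N) ∧ ∀ᶠ j in atTop, u j ∉ N := by
    obtain ⟨s, hs, hev⟩ : ∃ s ∈ 𝓝 z, ∀ᶠ j in atTop, u j ∉ s := by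
      simpa [mapClusterPt_iff_frequently, not_frequently] using hz
    obtain ⟨N, hN, hNs⟩ := (closed_nhds_basis z).mem_iff.1 hs
    exact ⟨N, hN, hev.mono fun j hj hjN => hj (hNs hjN)⟩
  -- Lifts near a tail of `u` outside `N` would cluster at a point with `g`-image `g z`, i.e. at `z`.
  obtain ⟨J, hJ⟩ := eventually_atTop.1 hev
  obtain ⟨w, hwN, hdist, z', hz'⟩ := exists_mapClusterPt_seq_near hf hg hp hpy
    (u := fun j => u (j + J)) (fun j => hu _) hNc.isOpen_compl fun j => hJ _ (by omega)
  have hgw : Tendsto (g ∘ w) atTop (𝓝 (g z)) :=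
    (hgu.comp (tendsto_add_atTop_nat J)).congr_dist
      (by simpa only [dist_comm, comp_apply] using hdist)
  have hz'z : z' = z := hginj <| eq_of_nhds_neBot <|
    (hz'.continuousAt_comp hg.continuousAt).clusterPt.mono hgw
  obtain ⟨j, hjN, hjN'⟩ := ((hz'.frequently (hz'z ▸ hN)).and_eventually (.of_forall hwN)).exists
  exact hjN' hjN

theorem isCountablyCompact_setOf_clusterPt_comap [RegularSpace X] (hf : IsClosedMap f)
    (hg : Continuous g) (hginj : Injective g) (hp : Tendsto p atTop (𝓝 y)) (hpy : ∀ n, p n ≠ y) :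
    IsCountablyCompact {x | ClusterPt x (comap f (map p atTop))} := by
  refine IsCountablyCompact.of_seq_clusterPt fun u hu => ?_
  obtain ⟨J, hJ⟩ := eventually_atTop.1 hu
  have hu' : ∀ j, ClusterPt (u (j + J)) (comap f (map p atTop)) := fun j => hJ _ (by omega)
  obtain ⟨z, ψ, hψ, hgz⟩ := exists_subseq_tendsto_comp_of_clusterPt hf hg hp hpy hu'
  have hz : MapClusterPt z atTop u :=
    ((mapClusterPt_of_tendsto_comp hf hg hginj hp hpy (fun j => hu' (ψ j)) hgz).of_comp
      hψ.tendsto_atTop).of_comp (tendsto_add_atTop_nat J)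
  exact ⟨z, isClosed_setOfPred_clusterPt.mem_of_mapClusterPt hz hu, hz⟩

end CountablyCompact

section Lift

variable {X Y : Type*} [TopologicalSpace X] [TopologicalSpace Y] {f : X → Y}

theorem exists_lift_tendsto [T1Space X] {M : Type*} [MetricSpace M] {g : X → M}
    (hf : IsClosedMap f) (hsurj : Surjective f) (hg : Continuous g) (hginj : Injective g)
    {x : X} {p : ℕ → Y} (hp : Tendsto p atTop (𝓝 (f x))) (hpx : Tendsto p atTop (map f (𝓝 x))) :
    ∃ q : ℕ → X, Tendsto q atTop (𝓝 x) ∧ ∀ n, f (q n) = p n := by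
  set T : ℕ → Set X := fun n => {w | f w = p n ∧ (p n = f x → w = x)}
  have hT : ∀ n, (T n).Nonempty := fun n => by
    by_cases h : p n = f x
    · exact ⟨x, h.symm, fun _ => rfl⟩
    · exact (hsurj (p n)).imp fun w hw => ⟨hw, fun h' => absurd h' h⟩
  obtain ⟨q, hqT, hgq⟩ := exists_seq_mem_tendsto_comp hT (g := g) (a := g x) fun ε hε => by
    have hU : g ⁻¹' Metric.ball (g x) ε ∈ 𝓝 x :=
      hg.continuousAt.preimage_mem_nhds (Metric.ball_mem_nhds _ hε)
    filter_upwards [hpx (image_mem_map hU)] with n ⟨w, hw, hfw⟩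
    by_cases h : p n = f x
    · exact ⟨x, ⟨h.symm, fun _ => rfl⟩, by simpa using hε⟩
    · exact ⟨w, ⟨hfw, fun h' => absurd h' h⟩, hw⟩
  refine ⟨q, tendsto_of_isClosedMap_of_tendsto_comp hf hg hginj
    (hp.congr fun n => (hqT n).1.symm) hgq fun n h => (hqT n).2 ((hqT n).1 ▸ h), fun n => (hqT n).1⟩

theorem exists_forall_tendsto_map_nhds [T2Space Y] (hf : Continuous f)
    (hseqcov : ∀ (p : ℕ → Y) (y : Y), NontrivialConvTo p y →
      ∃ (q : ℕ → X) (x : X), Tendsto q atTop (𝓝 x) ∧ ∀ n, f (q n) = p n)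
    {y : Y} {p₀ : ℕ → Y} (hp₀ : NontrivialConvTo p₀ y) {K : Set X} (hK : IsCompact K)
    (hKmem : ∀ z, f z = y → map p₀ atTop ≤ map f (𝓝 z) → z ∈ K) :
    ∃ x ∈ K, ∀ p, NontrivialConvTo p y → Tendsto p atTop (map f (𝓝 x)) := by
  by_contra! hbad
  have hU : ∀ x ∈ K, ∃ U, IsOpen U ∧ x ∈ U ∧
      ∃ s, NontrivialConvTo s y ∧ ¬∀ᶠ n in atTop, s n ∈ f '' U := fun x hx => by
    obtain ⟨s, hs, hsx⟩ := hbad x hx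
    rw [((nhds_basis_opens x).map f).tendsto_right_iff] at hsx
    obtain ⟨U, hU⟩ := not_forall.1 hsx
    obtain ⟨⟨hxU, hUo⟩, hsU⟩ := Classical.not_imp.1 hU
    exact ⟨U, hUo, hxU, s, hs, hsU⟩
  have : Nonempty Y := ⟨y⟩
  choose! U hUo hxU s hs hsU using hU
  obtain ⟨t, htK, hcover⟩ :=
    hK.elim_nhds_subcover U fun x hx => (hUo x hx).mem_nhds (hxU x hx)
  obtain ⟨Q, hQ⟩ := exists_map_atTop_eq_sup p₀ s t
  have hp₀Q : map p₀ atTop ≤ map Q atTop := hQ ▸ le_sup_left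
  have hsQ : ∀ x ∈ t, map (s x) atTop ≤ map Q atTop := fun x hx =>
    hQ ▸ le_sup_of_le_right (le_iSup₂ (f := fun x _ => map (s x) atTop) x hx)
  have hQy : Tendsto Q atTop (𝓝 y) := by
    rw [Tendsto, hQ]
    exact sup_le hp₀.1 (iSup₂_le fun x hx => (hs x (htK x hx)).1)
  obtain ⟨q, z, hqz, hfq⟩ := hseqcov Q y (hp₀.of_map_atTop_le hQy hp₀Q)
  have hQz : map Q atTop ≤ map f (𝓝 z) := by
    rw [show Q = f ∘ q from funext fun n => (hfq n).symm, ← map_map]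
    exact map_mono hqz
  have hfz : f z = y := tendsto_nhds_unique (hQz.trans (hf.tendsto z)) hQy
  obtain ⟨x, hxt, hzU⟩ := mem_iUnion₂.1 (hcover (hKmem z hfz (hp₀Q.trans hQz)))
  exact hsU x (htK x hxt) <|
    (hsQ x hxt).trans hQz (image_mem_map ((hUo x (htK x hxt)).mem_nhds hzU))

end Lift

universe u in
theorem exists_metricSpace_continuous_injective {X : Type u} [t : TopologicalSpace X]
    (h : ∃ σ : TopologicalSpace X, t ≤ σ ∧ @TopologicalSpace.MetrizableSpace X σ) :
    ∃ (M : Type u) (_ : MetricSpace M) (g : X → M), Continuous g ∧ Injective g := by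
  obtain ⟨σ, hle, hσ⟩ := h
  exact ⟨X, @TopologicalSpace.metrizableSpaceMetric X σ hσ, id, continuous_id_iff_le.2 hle,
    injective_id⟩

/-- Every closed sequence-covering continuous surjection `f : X → Y` between T1 regular
spaces with `X` submetrizable is 1-sequence-covering. -/
theorem closed_seqCovering_is_one_seqCovering
    {X Y : Type*} [tX : TopologicalSpace X] [TopologicalSpace Y]
    [T1Space X] [RegularSpace X] [T1Space Y] [RegularSpace Y]
    (hsub : ∃ σ : TopologicalSpace X, tX ≤ σ ∧ @TopologicalSpace.MetrizableSpace X σ)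
    (f : X → Y) (hf : Continuous f) (hclosed : IsClosedMap f)
    (hsurj : Function.Surjective f)
    (hseqcov : ∀ (p : ℕ → Y) (y : Y), NontrivialConvTo p y →
      ∃ (q : ℕ → X) (x : X), Tendsto q atTop (𝓝 x) ∧ ∀ n, f (q n) = p n) :
    ∀ y : Y, ∃ x : X, f x = y ∧
      ∀ p : ℕ → Y, NontrivialConvTo p y →
        ∃ q : ℕ → X, Tendsto q atTop (𝓝 x) ∧ ∀ n, f (q n) = p n := by
  obtain ⟨M, _, g, hg, hginj⟩ := exists_metricSpace_continuous_injective hsub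
  intro y
  by_cases hy : ∃ p, NontrivialConvTo p y
  swap
  · obtain ⟨x, hx⟩ := hsurj y
    exact ⟨x, hx, fun p hp => absurd ⟨p, hp⟩ hy⟩
  obtain ⟨p, hp⟩ := hy
  obtain ⟨p₀, hp₀, hp₀y⟩ := hp.exists_ne
  set K := f ⁻¹' {y} ∩ {x | ClusterPt x (comap f (map p₀ atTop))}
  have hK : IsCompact K :=
    ((isCountablyCompact_setOf_clusterPt_comap hclosed hg hginj hp₀.1 hp₀y).of_isClosed_subset
      ((isClosed_singleton.preimage hf).inter isClosed_setOfPred_clusterPt)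
      inter_subset_right).isCompact_of_continuous_injective hg hginj
  obtain ⟨x, ⟨hxy, -⟩, hx⟩ := exists_forall_tendsto_map_nhds hf hseqcov hp₀ hK
    fun z hz h => ⟨hz, clusterPt_comap_of_map_atTop_le h⟩
  exact ⟨x, hxy, fun p hp => exists_lift_tendsto hclosed hsurj hg hginj (hxy ▸ hp.1) (hx p hp)⟩
end

section
/- Let f : X → Y be a closed continuous map, and let B ⊆ X be an infinite set contained in the range of a sequence q such that f∘q = p where p is a nontrivial sequence converging to some point y ∈ Y with all terms distinct from y. If B is closed in X and f restricted to B is finite-to-one, then f[B] is an infinite closed subset of {p(n) : n ∈ ℕ}, contradicting convergence of p; hence no infinite subset of {q(n) : n ∈ ℕ} mapping injectively onto infinitely many terms of p is closed in X. -/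
open Filter Topology

theorem Set.Infinite.frequently_mem_of_subset_range {α : Type*} {u : ℕ → α} {S : Set α}
    (hS : S.Infinite) (hSu : S ⊆ Set.range u) : ∃ᶠ n in atTop, u n ∈ S :=
  Nat.frequently_atTop_iff_infinite.mpr (hS.preimage hSu)

theorem Filter.Tendsto.mem_closure_of_infinite_subset_range {α : Type*} [TopologicalSpace α]
    {u : ℕ → α} {y : α} (hu : Tendsto u atTop (𝓝 y)) {S : Set α} (hS : S.Infinite)
    (hSu : S ⊆ Set.range u) : y ∈ closure S :=
  mem_closure_of_frequently_of_tendsto (hS.frequently_mem_of_subset_range hSu) hu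

theorem no_infinite_closed_subset_of_lift_general
    {X Y : Type*} [TopologicalSpace X] [TopologicalSpace Y]
    (f : X → Y) (hclosed : IsClosedMap f)
    (y : Y) (p : ℕ → Y) (hp : Tendsto p atTop (𝓝 y)) (hpy : ∀ n, p n ≠ y)
    (q : ℕ → X) (hq : ∀ n, f (q n) = p n) :
    ∀ B ⊆ Set.range q, B.Infinite → Set.InjOn f B → ¬ IsClosed B := by
  intro B hBq hBinf hinj hB
  have hfBp : f '' B ⊆ Set.range p := by
    rw [show p = f ∘ q from funext fun n => (hq n).symm, Set.range_comp]
    exact Set.image_mono hBq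
  have hy : y ∈ f '' B := by
    simpa only [(hclosed B hB).closure_eq] using
      hp.mem_closure_of_infinite_subset_range (hBinf.image hinj) hfBp
  obtain ⟨n, hn⟩ := hfBp hy
  exact hpy n hn

/-- Let `f : X → Y` be a closed continuous map to a T1 space, `p` a nontrivial
sequence converging to `y` with all terms distinct from `y`, and `q` a sequence in `X`
covering `p`. Then no infinite subset of the range of `q` on which `f` is injective
(so that it maps onto infinitely many terms of `p`) is closed in `X`. -/
theorem no_infinite_closed_subset_of_lift
    {X Y : Type*} [TopologicalSpace X] [TopologicalSpace Y] [T1Space Y]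
    (f : X → Y) (hf : Continuous f) (hclosed : IsClosedMap f)
    (y : Y) (p : ℕ → Y) (hp : Tendsto p atTop (𝓝 y)) (hpy : ∀ n, p n ≠ y)
    (q : ℕ → X) (hq : ∀ n, f (q n) = p n) :
    ∀ B ⊆ Set.range q, B.Infinite → Set.InjOn f B → ¬ IsClosed B :=
  no_infinite_closed_subset_of_lift_general f hclosed y p hp hpy q hq
end

section
/- There exist a countable submetrizable T1 regular space X and a continuous surjection f : X → S_ω onto the sequential fan such that f is compact (all fibers are compact), sequence-covering, but not 1-sequence-covering. -/
open Filter Topology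

/-- `L g = ⋃ n {⟨n,k⟩ : k ≥ g n}`. -/
def L (g : ℕ → ℕ) : Set (ℕ × ℕ) := {x | g x.1 ≤ x.2}

/-- The sequential fan `S_ω` as `{0} ∪ (ℕ × ℕ)` (with `none` playing the role of `0`). -/
def fanTopology : TopologicalSpace (Option (ℕ × ℕ)) :=
  TopologicalSpace.generateFrom
    ({s | ∃ a : ℕ × ℕ, s = {some a}} ∪
     {s | ∃ g : ℕ → ℕ, s = insert none (Option.some '' L g)})

/-!
The space `X` is a union of layers `j ∈ ℕ`, each a copy of `S_ω` in which only the first `j + 1`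
columns converge to the apex, together with a limit point over every point of `S_ω`; `f` forgets
the layer. Fibres are convergent sequences, hence compact. A nontrivial sequence converging to the
apex of `S_ω` meets only finitely many columns, so it lifts into a layer with enough columns; a
sequence converging to an isolated point is eventually constant. Over the apex, column `j + 1`
does not lift to a sequence converging to the apex of layer `j`, and column `0` does not lift to
one converging to the top limit point, whose neighbourhoods may cut column `0` differently in each
layer. Submetrizability holds for every countable Tychonoff space.
-/

open Set

section

variable {X : Type*} [t : TopologicalSpace X]

theorem exists_coarser_metrizable_of_continuous_injective {Y : Type*} [TopologicalSpace Y]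
    [TopologicalSpace.MetrizableSpace Y] {Φ : X → Y} (hΦ : Continuous Φ)
    (hinj : Function.Injective Φ) :
    ∃ σ : TopologicalSpace X, t ≤ σ ∧ @TopologicalSpace.MetrizableSpace X σ :=
  ⟨.induced Φ inferInstance, continuous_iff_le_induced.1 hΦ,
    @IsEmbedding.metrizableSpace _ _ (.induced Φ _) _ _ _ hinj.isEmbedding_induced⟩

/-- Countably many Urysohn functions separate the points of a countable Tychonoff space. -/
theorem exists_coarser_metrizable_of_countable [Countable X] [T1Space X] [RegularSpace X] :
    ∃ σ : TopologicalSpace X, t ≤ σ ∧ @TopologicalSpace.MetrizableSpace X σ := by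
  have hsep (p : {p : X × X // p.1 ≠ p.2}) :
      ∃ g : X → unitInterval, Continuous g ∧ g p.1.1 = 0 ∧ EqOn g 1 {p.1.2} :=
    CompletelyRegularSpace.completely_regular _ _ isClosed_singleton p.2
  choose g hg using hsep
  refine exists_coarser_metrizable_of_continuous_injective
    (Φ := fun x p => g p x) (continuous_pi fun p => (hg p).1) fun x y hxy => ?_
  by_contra hne
  obtain ⟨-, hx, hy⟩ := hg ⟨(x, y), hne⟩
  have h : g ⟨(x, y), hne⟩ x = g ⟨(x, y), hne⟩ y := congr_fun hxy _
  rw [hx, hy rfl] at h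
  exact zero_ne_one h

theorem exists_mem_nhds_isClosed_subset_of_isolated {x : X} {C s : Set X} (hC : IsClosed C)
    (hCx : C ∈ 𝓝 x) (hiso : ∀ y ∈ C, y ≠ x → IsOpen {y}) (hs : s ∈ 𝓝 x) :
    ∃ t ∈ 𝓝 x, IsClosed t ∧ t ⊆ s := by
  refine ⟨s ∩ C, inter_mem hs hCx, isClosed_of_closure_subset fun y hy => ?_, inter_subset_left⟩
  have hyC : y ∈ C := hC.closure_subset (closure_mono inter_subset_right hy)
  obtain rfl | hyx := eq_or_ne y x
  · exact ⟨mem_of_mem_nhds hs, hyC⟩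
  · obtain ⟨z, rfl, hz⟩ := mem_closure_iff.1 hy {y} (hiso y hyC hyx) rfl
    exact hz

end

section SequenceCovering

variable {X Y : Type*} [TopologicalSpace X] [TopologicalSpace Y]

def IsSequenceCovering (f : X → Y) : Prop :=
  ∀ (p : ℕ → Y) (y : Y), NontrivialConvTo p y →
    ∃ (q : ℕ → X) (x : X), Tendsto q atTop (𝓝 x) ∧ ∀ n, f (q n) = p n

def IsOneSequenceCovering (f : X → Y) : Prop :=
  ∀ y, ∃ x : X, f x = y ∧ ∀ p : ℕ → Y, NontrivialConvTo p y →
    ∃ q : ℕ → X, Tendsto q atTop (𝓝 x) ∧ ∀ n, f (q n) = p n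

end SequenceCovering

section Fan

attribute [local instance] fanTopology

theorem isOpen_singleton_some (a : ℕ × ℕ) : IsOpen {some a} :=
  TopologicalSpace.isOpen_generateFrom_of_mem (Or.inl ⟨a, rfl⟩)

theorem isOpen_insert_none_image_L (g : ℕ → ℕ) : IsOpen (insert none (some '' L g)) :=
  TopologicalSpace.isOpen_generateFrom_of_mem (Or.inr ⟨g, rfl⟩)

theorem t1Space_fan : T1Space (Option (ℕ × ℕ)) := by
  refine ⟨fun y => isOpen_compl_iff.1 (isOpen_iff_forall_mem_open.2 fun x hx => ?_)⟩
  rcases x with _ | b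
  · obtain ⟨a, rfl⟩ := Option.ne_none_iff_exists'.1 (Ne.symm hx)
    refine ⟨insert none (some '' L fun c => if c = a.1 then a.2 + 1 else 0), ?_,
      isOpen_insert_none_image_L _, mem_insert _ _⟩
    rintro _ (rfl | ⟨b, hb, rfl⟩) h
    · simp at h
    · obtain rfl := Option.some_injective _ h
      simp [L] at hb
  · exact ⟨{some b}, singleton_subset_iff.2 hx, isOpen_singleton_some b, rfl⟩

attribute [local instance] t1Space_fan

theorem eventually_mem_insert_none_image_L {ι : Type*} {l : Filter ι}
    {p : ι → Option (ℕ × ℕ)} (hp : Tendsto p l (𝓝 none)) (g : ℕ → ℕ) :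
    ∀ᶠ i in l, p i ∈ insert none (some '' L g) :=
  hp ((isOpen_insert_none_image_L g).mem_nhds (mem_insert _ _))

theorem not_nontrivialConvTo_some (p : ℕ → Option (ℕ × ℕ)) (a : ℕ × ℕ) :
    ¬ NontrivialConvTo p (some a) := by
  rintro ⟨hp, hnt⟩
  obtain ⟨N, hN⟩ := eventually_atTop.1 (hp ((isOpen_singleton_some a).mem_nhds rfl))
  exact hnt ⟨N, fun n hn => (hN n hn).trans (hN N le_rfl).symm⟩

theorem finite_columns_of_tendsto {p : ℕ → Option (ℕ × ℕ)} (hp : Tendsto p atTop (𝓝 none)) :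
    {c | ∃ n k, p n = some (c, k)}.Finite := by
  set C := {c | ∃ n k, p n = some (c, k)}
  by_contra hinf
  choose! n k hnk using fun c (hc : c ∈ C) => hc
  have hinj : InjOn n C := fun c hc c' hc' h =>
    (Prod.ext_iff.1 (Option.some_injective _ ((hnk c hc).symm.trans (h ▸ hnk c' hc')))).1
  -- the threshold `k c + 1` in column `c` excludes the chosen point `p (n c)`
  obtain ⟨N, hN⟩ := eventually_atTop.1 (eventually_mem_insert_none_image_L hp (k + 1))
  obtain ⟨_, ⟨c, hc, rfl⟩, hcN⟩ := (Set.Infinite.image hinj hinf).exists_gt N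
  rcases hnk c hc ▸ hN (n c) hcN.le with h | ⟨b, hb, h⟩
  · simp at h
  · obtain rfl := Option.some_injective _ h
    simp [L] at hb

theorem nontrivialConvTo_column (c : ℕ) : NontrivialConvTo (fun n => some (c, n)) none := by
  refine ⟨TopologicalSpace.tendsto_nhds_generateFrom_iff.2 ?_,
    fun ⟨N, hN⟩ => by simpa using hN (N + 1) N.le_succ⟩
  rintro s (⟨a, rfl⟩ | ⟨g, rfl⟩) hs
  · simp at hs
  · filter_upwards [eventually_ge_atTop (g c)] with n hn
    exact mem_insert_of_mem _ ⟨(c, n), hn, rfl⟩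

/-- Layer `j` (the points with `layer = some j`) is a copy of `S_ω` in which only the first
`j + 1` columns converge to the apex `⟨some j, none⟩`; the points `⟨none, y⟩` are the limits
of `⟨some j, y⟩` as `j → ∞`. -/
@[ext]
structure FanCover where
  layer : Option ℕ
  base : Option (ℕ × ℕ)

namespace FanCover

instance : Countable FanCover :=
  Function.Injective.countable (f := fun x : FanCover => (x.layer, x.base))
    fun _ _ h => FanCover.ext_iff.2 (Prod.ext_iff.1 h)

def nhdsApex (j : ℕ) : Filter FanCover :=
  pure ⟨some j, none⟩ ⊔ ⨆ c ≤ j, map (fun k => ⟨some j, some (c, k)⟩) atTop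

/-- At `⟨none, none⟩` the threshold in column `c` may depend on the layer. -/
def nhdsAux : FanCover → Filter FanCover
  | ⟨some j, some a⟩ => pure ⟨some j, some a⟩
  | ⟨none, some a⟩ => pure ⟨none, some a⟩ ⊔ map (fun j => ⟨some j, some a⟩) atTop
  | ⟨some j, none⟩ => nhdsApex j
  | ⟨none, none⟩ => pure ⟨none, none⟩ ⊔ atTop.bind nhdsApex

theorem mem_nhdsApex {s : Set FanCover} {j : ℕ} :
    s ∈ nhdsApex j ↔ ⟨some j, none⟩ ∈ s ∧ ∀ c ≤ j, ∀ᶠ k in atTop, ⟨some j, some (c, k)⟩ ∈ s := by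
  simp [nhdsApex]

instance : TopologicalSpace FanCover := .mkOfNhds nhdsAux

theorem nhds_eq_nhdsAux (x : FanCover) : 𝓝 x = nhdsAux x := by
  have hapex {s : Set FanCover} {j : ℕ} (hs : s ∈ nhdsApex j) : {y | s ∈ nhdsAux y} ∈ nhdsApex j :=
    mem_nhdsApex.2 ⟨hs, (mem_nhdsApex.1 hs).2⟩
  refine TopologicalSpace.nhds_mkOfNhds _ _ ?_ ?_
  · rintro ⟨_ | j, _ | a⟩
    exacts [le_sup_left, le_sup_left, le_sup_left, le_rfl]
  · rintro ⟨_ | j, _ | a⟩ s hs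
    · exact ⟨hs, mem_bind'.2 <| mem_of_superset (mem_bind'.1 hs.2) fun j => hapex⟩
    · exact ⟨hs, hs.2⟩
    · exact hapex hs
    · exact hs

theorem mem_nhds_isolated {s : Set FanCover} {j : ℕ} {a : ℕ × ℕ} :
    s ∈ 𝓝 ⟨some j, some a⟩ ↔ ⟨some j, some a⟩ ∈ s := by
  rw [nhds_eq_nhdsAux]; rfl

theorem mem_nhds_limit {s : Set FanCover} {a : ℕ × ℕ} :
    s ∈ 𝓝 ⟨none, some a⟩ ↔ ⟨none, some a⟩ ∈ s ∧ ∀ᶠ j in atTop, ⟨some j, some a⟩ ∈ s := by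
  rw [nhds_eq_nhdsAux]; rfl

theorem mem_nhds_apex {s : Set FanCover} {j : ℕ} :
    s ∈ 𝓝 ⟨some j, none⟩ ↔
      ⟨some j, none⟩ ∈ s ∧ ∀ c ≤ j, ∀ᶠ k in atTop, ⟨some j, some (c, k)⟩ ∈ s := by
  rw [nhds_eq_nhdsAux]; exact mem_nhdsApex

theorem mem_nhds_top {s : Set FanCover} :
    s ∈ 𝓝 ⟨none, none⟩ ↔ ⟨none, none⟩ ∈ s ∧ ∀ᶠ j in atTop, s ∈ 𝓝 ⟨some j, none⟩ := by
  simp only [nhds_eq_nhdsAux]; rfl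

theorem isOpen_singleton_isolated (j : ℕ) (a : ℕ × ℕ) :
    IsOpen ({⟨some j, some a⟩} : Set FanCover) :=
  isOpen_singleton_iff_nhds_eq_pure _ |>.2 (nhds_eq_nhdsAux _)

theorem isClopen_setOf_layer_eq (j : ℕ) : IsClopen {x : FanCover | x.layer = some j} := by
  refine ⟨isOpen_compl_iff.1 (isOpen_iff_mem_nhds.2 ?_), isOpen_iff_mem_nhds.2 ?_⟩
  · rintro ⟨_ | j', _ | a⟩ (hx : _ ≠ _)
    · exact mem_nhds_top.2 ⟨by simp, (eventually_ne_atTop j).mono fun j' hj' =>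
        mem_nhds_apex.2 ⟨by simpa using hj', fun c _ => .of_forall fun k => by simpa using hj'⟩⟩
    · exact mem_nhds_limit.2
        ⟨by simp, (eventually_ne_atTop j).mono fun j' hj' => by simpa using hj'⟩
    · exact mem_nhds_apex.2 ⟨hx, fun c _ => .of_forall fun k => hx⟩
    · exact mem_nhds_isolated.2 hx
  · rintro ⟨_ | j', _ | a⟩ (hx : _ = _) <;> cases hx
    · exact mem_nhds_apex.2 ⟨rfl, fun c _ => .of_forall fun k => rfl⟩
    · exact mem_nhds_isolated.2 rfl

theorem isClosed_setOf_layer_eq (o : Option ℕ) : IsClosed {x : FanCover | x.layer = o} := by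
  cases o with
  | some j => exact (isClopen_setOf_layer_eq j).isClosed
  | none =>
    convert (isOpen_iUnion fun j => (isClopen_setOf_layer_eq j).isOpen).isClosed_compl using 1
    ext ⟨_ | j, b⟩ <;> simp

theorem continuous_base : Continuous base := by
  refine continuous_generateFrom_iff.2 ?_
  rintro s (⟨a, rfl⟩ | ⟨g, rfl⟩) <;> refine isOpen_iff_mem_nhds.2 ?_
  · rintro ⟨_ | j, _ | b⟩ (hx : _ = some a) <;> cases hx
    · exact mem_nhds_limit.2 ⟨rfl, .of_forall fun j => rfl⟩
    · exact mem_nhds_isolated.2 rfl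
  · have hapex (j : ℕ) : base ⁻¹' insert none (some '' L g) ∈ 𝓝 ⟨some j, none⟩ :=
      mem_nhds_apex.2 ⟨mem_insert _ _, fun c _ => (eventually_ge_atTop (g c)).mono
        fun k hk => mem_insert_of_mem _ ⟨(c, k), hk, rfl⟩⟩
    rintro ⟨_ | j, _ | b⟩ hx
    · exact mem_nhds_top.2 ⟨hx, .of_forall hapex⟩
    · exact mem_nhds_limit.2 ⟨hx, .of_forall fun j => hx⟩
    · exact hapex j
    · exact mem_nhds_isolated.2 hx

instance : T1Space FanCover := by
  refine ⟨fun x => ?_⟩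
  convert (isClosed_setOf_layer_eq x.layer).inter
    ((isClosed_singleton (x := x.base)).preimage continuous_base)
  ext y
  simp [FanCover.ext_iff]

theorem exists_isClosed_mem_nhds_top_subset {s : Set FanCover} (hs : s ∈ 𝓝 ⟨none, none⟩) :
    ∃ t ∈ 𝓝 ⟨none, none⟩, IsClosed t ∧ t ⊆ s := by
  -- requiring `j ≤ k` in layer `j` keeps every `⟨none, some (c, k)⟩` out of the closure
  set t := {x ∈ s | ∀ a, x.base = some a → ∃ j, x.layer = some j ∧ j ≤ a.2 ∧ ⟨some j, none⟩ ∈ s}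
  obtain ⟨hs₀, hsj⟩ := mem_nhds_top.1 hs
  refine ⟨t, mem_nhds_top.2 ⟨⟨hs₀, by simp⟩, hsj.mono fun j hj => ?_⟩, ?_, sep_subset _ _⟩
  · obtain ⟨hj₀, hjc⟩ := mem_nhds_apex.1 hj
    refine mem_nhds_apex.2 ⟨⟨hj₀, by simp⟩, fun c hc => ?_⟩
    filter_upwards [hjc c hc, eventually_ge_atTop j] with k hk hjk
    exact ⟨hk, by simpa using ⟨hjk, hj₀⟩⟩
  · refine isOpen_compl_iff.1 (isOpen_iff_mem_nhds.2 ?_)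
    rintro ⟨_ | j, _ | ⟨c, k⟩⟩ hx
    · exact absurd ⟨hs₀, by simp⟩ hx
    · refine mem_nhds_limit.2 ⟨hx, (eventually_gt_atTop k).mono fun j hj ⟨_, h⟩ => ?_⟩
      obtain ⟨j', hj', hle, -⟩ := h _ rfl
      cases hj'
      omega
    · refine mem_nhds_apex.2 ⟨hx, fun c _ => .of_forall fun k ⟨_, h⟩ => ?_⟩
      obtain ⟨j', hj', -, h'⟩ := h _ rfl
      cases hj'
      exact hx ⟨h', by simp⟩
    · exact mem_nhds_isolated.2 hx

instance : RegularSpace FanCover := by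
  refine .of_exists_mem_nhds_isClosed_subset ?_
  rintro ⟨_ | j, _ | a⟩ s hs
  · exact exists_isClosed_mem_nhds_top_subset hs
  · refine exists_mem_nhds_isClosed_subset_of_isolated (C := base ⁻¹' {some a})
      (isClosed_singleton.preimage continuous_base)
      (mem_nhds_limit.2 ⟨rfl, .of_forall fun _ => rfl⟩) ?_ hs
    rintro ⟨_ | j, b⟩ (rfl : b = some a) hne
    · exact absurd rfl hne
    · exact isOpen_singleton_isolated j a
  · refine exists_mem_nhds_isClosed_subset_of_isolated (isClopen_setOf_layer_eq j).isClosed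
      ((isClopen_setOf_layer_eq j).isOpen.mem_nhds rfl) ?_ hs
    rintro ⟨j', _ | a⟩ (rfl : j' = some j) hne
    · exact absurd rfl hne
    · exact isOpen_singleton_isolated j a
  · exact exists_mem_nhds_isClosed_subset_of_isolated isClosed_singleton
      (mem_nhds_isolated.2 rfl) (fun y hy hne => absurd hy hne) hs

theorem tendsto_layer_atTop (y : Option (ℕ × ℕ)) :
    Tendsto (fun j => (⟨some j, y⟩ : FanCover)) atTop (𝓝 ⟨none, y⟩) := by
  intro s hs
  rcases y with _ | a
  · exact (mem_nhds_top.1 hs).2.mono fun j hj => (mem_nhds_apex.1 hj).1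
  · exact (mem_nhds_limit.1 hs).2

theorem isCompact_base_preimage (y : Option (ℕ × ℕ)) : IsCompact (base ⁻¹' {y}) := by
  convert (tendsto_layer_atTop y).isCompact_insert_range using 1
  ext ⟨_ | j, b⟩ <;> simp [eq_comm]

theorem tendsto_apex_of_tendsto_none {ι : Type*} {l : Filter ι} {p : ι → Option (ℕ × ℕ)}
    (hp : Tendsto p l (𝓝 none)) {M : ℕ} (hM : ∀ i c k, p i = some (c, k) → c ≤ M) :
    Tendsto (fun i => (⟨some M, p i⟩ : FanCover)) l (𝓝 ⟨some M, none⟩) := by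
  refine tendsto_def.2 fun s hs => ?_
  obtain ⟨hs₀, hcol⟩ := mem_nhds_apex.1 hs
  obtain ⟨K, hK⟩ := eventually_atTop.1 ((eventually_all_finite (finite_Iic M)).2 hcol)
  filter_upwards [eventually_mem_insert_none_image_L hp fun _ => K] with i hi
  rcases hi with h | ⟨⟨c, k⟩, hk, h⟩
  · simpa [h] using hs₀
  · simpa [← h] using hK k hk c (hM i c k h.symm)

theorem isSequenceCovering_base : IsSequenceCovering base := by
  rintro p (_ | a) hp
  · obtain ⟨M, hM⟩ := (finite_columns_of_tendsto hp.1).bddAbove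
    exact ⟨_, _, tendsto_apex_of_tendsto_none hp.1 fun n c k h => hM ⟨n, k, h⟩, fun n => rfl⟩
  · exact absurd hp (not_nontrivialConvTo_some p a)

theorem not_tendsto_apex_of_base_eq_column {q : ℕ → FanCover} {j : ℕ}
    (hq : ∀ n, (q n).base = some (j + 1, n)) : ¬ Tendsto q atTop (𝓝 ⟨some j, none⟩) := by
  intro hlim
  have hU : {x : FanCover | ∀ c k, x.base = some (c, k) → c ≤ j} ∈ 𝓝 ⟨some j, none⟩ :=
    mem_nhds_apex.2 ⟨by simp, fun c hc => .of_forall fun k => by simpa using hc⟩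
  obtain ⟨n, hn⟩ := (hlim.eventually_mem hU).exists
  exact absurd (hn _ _ (hq n)) (by omega)

theorem not_tendsto_top_of_base_eq_column {q : ℕ → FanCover}
    (hq : ∀ n, (q n).base = some (0, n)) : ¬ Tendsto q atTop (𝓝 ⟨none, none⟩) := by
  intro hlim
  have hlayer (j : ℕ) : ∀ᶠ n in atTop, (q n).layer ≠ some j :=
    hlim ((isClopen_setOf_layer_eq j).compl.isOpen.mem_nhds (by simp))
  -- each layer meets the range of `q` in column `0` only finitely often
  have hA : (range q)ᶜ ∈ 𝓝 ⟨none, none⟩ := by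
    refine mem_nhds_top.2 ⟨fun ⟨n, hn⟩ => by simpa [hn] using hq n, .of_forall fun j =>
      mem_nhds_apex.2 ⟨fun ⟨n, hn⟩ => by simpa [hn] using hq n,
        fun c _ => (hlayer j).mono fun k hk ⟨n, hn⟩ => ?_⟩⟩
    obtain ⟨rfl, rfl⟩ : c = 0 ∧ k = n := by simpa [hn] using hq n
    exact hk (by rw [hn])
  obtain ⟨n, hn⟩ := (hlim.eventually_mem hA).exists
  exact hn ⟨n, rfl⟩

theorem not_isOneSequenceCovering_base : ¬ IsOneSequenceCovering base := by
  intro h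
  obtain ⟨⟨_ | j, b⟩, rfl : b = none, hlift⟩ := h none
  · obtain ⟨q, hq, hqb⟩ := hlift _ (nontrivialConvTo_column 0)
    exact not_tendsto_top_of_base_eq_column hqb hq
  · obtain ⟨q, hq, hqb⟩ := hlift _ (nontrivialConvTo_column (j + 1))
    exact not_tendsto_apex_of_base_eq_column hqb hq

end FanCover

end Fan

/-- There exist a countable submetrizable T1 regular space `X` and a continuous
surjection `f : X → S_ω` with compact fibers which is sequence-covering but not
1-sequence-covering. -/
theorem exists_compact_seqCovering_not_one_seqCovering :
    ∃ (X : Type) (tX : TopologicalSpace X),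
      Countable X ∧
      (∃ σ : TopologicalSpace X, tX ≤ σ ∧ @TopologicalSpace.MetrizableSpace X σ) ∧
      @T1Space X tX ∧ @RegularSpace X tX ∧
      ∃ f : X → Option (ℕ × ℕ),
        @Continuous X _ tX fanTopology f ∧
        Function.Surjective f ∧
        (∀ y, @IsCompact X tX (f ⁻¹' {y})) ∧
        (∀ (p : ℕ → Option (ℕ × ℕ)) (y : Option (ℕ × ℕ)),
          @NontrivialConvTo _ fanTopology p y →
          ∃ (q : ℕ → X) (x : X),
            @Tendsto ℕ X q atTop (@nhds X tX x) ∧ ∀ n, f (q n) = p n) ∧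
        ¬ (∀ y, ∃ x : X, f x = y ∧
            ∀ p : ℕ → Option (ℕ × ℕ), @NontrivialConvTo _ fanTopology p y →
              ∃ q : ℕ → X, @Tendsto ℕ X q atTop (@nhds X tX x) ∧ ∀ n, f (q n) = p n) :=
  ⟨FanCover, inferInstance, inferInstance, exists_coarser_metrizable_of_countable, inferInstance,
    inferInstance, FanCover.base, FanCover.continuous_base, fun y => ⟨⟨none, y⟩, rfl⟩,
    FanCover.isCompact_base_preimage, FanCover.isSequenceCovering_base,
    FanCover.not_isOneSequenceCovering_base⟩
end

section
/- Let {A_i} be a partition of ℕ into infinite sets with A_i < A_j for i < j, f_i : A_i → ℕ the order isomorphisms, ξ(k) the index with k ∈ A_{ξ(k)}. For any increasing g : ℕ → ℕ define g'(n) = f_n⁻¹(g(n)). Then for all n, k ∈ ℕ with n ≥ ξ(k) and k ≥ g'(n), we have f_{ξ(k)}(k) ≥ g(ξ(k)). -/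
/-!
Because the pieces are ordered, the element of `A (ξ k)` enumerated as `g (ξ k)` lies below the
element of `A n` enumerated as `g (ξ k)`, hence (by monotonicity of `g` and of `(f n)⁻¹`) below
`g' n ≤ k`; applying the order isomorphism `f (ξ k)` gives the claim.
-/

section OrderedPartition

variable {ι α β : Type*} [PartialOrder ι] [Preorder α] [Preorder β] {A : ι → Set α}

theorem symm_apply_lt_symm_apply_of_lt
    (hlt : ∀ i j, i < j → ∀ gij : (A i) ≃o (A j), ∀ n : A i, (n : α) < (gij n : α))
    (f : ∀ i, (A i) ≃o β) {i j : ι} (hij : i < j) (b : β) :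
    (((f i).symm b : A i) : α) < (((f j).symm b : A j) : α) := by
  simpa using hlt i j hij ((f i).trans (f j).symm) ((f i).symm b)

theorem symm_apply_le_symm_apply_of_le
    (hlt : ∀ i j, i < j → ∀ gij : (A i) ≃o (A j), ∀ n : A i, (n : α) < (gij n : α))
    (f : ∀ i, (A i) ≃o β) {i j : ι} (hij : i ≤ j) (b : β) :
    (((f i).symm b : A i) : α) ≤ (((f j).symm b : A j) : α) := by
  rcases hij.lt_or_eq with hij | rfl
  · exact (symm_apply_lt_symm_apply_of_lt hlt f hij b).le
  · exact le_rfl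

end OrderedPartition

theorem key_computation_general (A : ℕ → Set ℕ)
    (hlt : ∀ i j, i < j → ∀ gij : (A i) ≃o (A j), ∀ n : A i, (n : ℕ) < (gij n : ℕ))
    (f : ∀ i, (A i) ≃o ℕ)
    (ξ : ℕ → ℕ) (hξ : ∀ k, k ∈ A (ξ k))
    (g : ℕ → ℕ) (hg : StrictMono g)
    (n k : ℕ) (hn : ξ k ≤ n) (hk : (((f n).symm (g n) : A n) : ℕ) ≤ k) :
    g (ξ k) ≤ (f (ξ k)) ⟨k, hξ k⟩ := by
  have hg' : (((f (ξ k)).symm (g (ξ k)) : A (ξ k)) : ℕ) ≤ k :=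
    calc (((f (ξ k)).symm (g (ξ k)) : A (ξ k)) : ℕ)
        ≤ (((f n).symm (g (ξ k)) : A n) : ℕ) := symm_apply_le_symm_apply_of_le hlt f hn _
      _ ≤ (((f n).symm (g n) : A n) : ℕ) := (f n).symm.monotone (hg.monotone hn)
      _ ≤ k := hk
  exact (f (ξ k)).symm_apply_le.1 hg'

/-- Key computation: with `{A i}` a partition of `ℕ` into infinite sets with `A i < A j`
for `i < j`, `f i : A i ≃o ℕ` the order isomorphisms, `ξ k` the index with `k ∈ A (ξ k)`,
and `g : ℕ → ℕ` increasing with `g' n = (f n)⁻¹ (g n)`: for all `n, k` with `ξ k ≤ n`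
and `g' n ≤ k` we have `g (ξ k) ≤ f (ξ k) k`. -/
theorem key_computation (A : ℕ → Set ℕ)
    (hInf : ∀ i, (A i).Infinite)
    (hDisj : Pairwise fun i j => Disjoint (A i) (A j))
    (hUnion : (⋃ i, A i) = Set.univ)
    (hlt : ∀ i j, i < j → ∀ gij : (A i) ≃o (A j), ∀ n : A i, (n : ℕ) < (gij n : ℕ))
    (f : ∀ i, (A i) ≃o ℕ)
    (ξ : ℕ → ℕ) (hξ : ∀ k, k ∈ A (ξ k))
    (g : ℕ → ℕ) (hg : StrictMono g)
    (n k : ℕ) (hn : ξ k ≤ n) (hk : (((f n).symm (g n) : A n) : ℕ) ≤ k) :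
    g (ξ k) ≤ (f (ξ k)) ⟨k, hξ k⟩ :=
  key_computation_general A hlt f ξ hξ g hg n k hn hk
end
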